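/- Let H = (S_{r_1})^{d_1} × … × (S_{r_n})^{d_n} ≤ S_N (with N = Σ d_i r_i) act on T = {(i,j,k)}, and τ(i,j,k) = (i,j,k+1) as above. The expected number of k-cycles of a uniformly random element of the coset τH equals (1/k) · Σ_{i : d_i | k and d_i r_i ≥ k} d_i. -/

import Mathlib

/-- `cycleCount σ k` is the number of `k`-cycles of `σ` (with `1`-cycles = fixed points). -/
def cycleCount {α : Type*} [Fintype α] [DecidableEq α] (σ : Equiv.Perm α) (k : ℕ) : ℕ :=
  if k = 1 then (Finset.univ.filter fun x => σ x = x).card else Multiset.count k σ.cycleType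

/-- The permutation of the grid `{1,…,r} × Z/dZ` acting by `h k` on the fiber over `k`. -/
def gridPerm (r d : ℕ) (h : Fin d → Equiv.Perm (Fin r)) : Equiv.Perm (Fin r × Fin d) where
  toFun p := (h p.2 p.1, p.2)
  invFun p := ((h p.2).symm p.1, p.2)
  left_inv p := by simp
  right_inv p := by simp

/-- The cyclic shift `τ(j,k) = (j,k+1)` of the grid. -/
def tauGrid (r d : ℕ) : Equiv.Perm (Fin r × Fin d) :=
  (Equiv.refl (Fin r)).prodCongr (finRotate d)

/-- The descending product `m_i(h) = h_{i,d_i} ⋯ h_{i,1} ∈ S_{r_i}` (applying `h_{i,0}` first). -/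
def mComp {r d : ℕ} (h : Fin d → Equiv.Perm (Fin r)) : Equiv.Perm (Fin r) :=
  ((List.ofFn h).reverse).prod

/-- The Young-type group `H = ∏ᵢ (S_{rᵢ})^{dᵢ}`. -/
abbrev BigH (n : ℕ) (r d : Fin n → ℕ) := ∀ i : Fin n, Fin (d i) → Equiv.Perm (Fin (r i))

/-- The action of `h ∈ H` on `T = ⨿ᵢ Fin(rᵢ) × Z/dᵢZ`, permuting `j`-coordinates. -/
def hPermBig {n : ℕ} {r d : Fin n → ℕ} (h : BigH n r d) :
    Equiv.Perm (Σ i : Fin n, Fin (r i) × Fin (d i)) :=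
  Equiv.sigmaCongrRight fun i => gridPerm (r i) (d i) (h i)

/-- The permutation `τ(i,j,k) = (i,j,k+1)` of `T`. -/
def tauBig (n : ℕ) (r d : Fin n → ℕ) : Equiv.Perm (Σ i : Fin n, Fin (r i) × Fin (d i)) :=
  Equiv.sigmaCongrRight fun i => tauGrid (r i) (d i)

/-!
Counting points instead of cycles, `k · X_k(σ)` is the number of points of minimal period `k`
under `σ`. The permutation `τh` preserves each block `i` and moves the fibre over `c ∈ ℤ/dᵢ` to
the fibre over `c + 1`, so a point `(j, c)` first returns to its fibre after `dᵢ` steps, where it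
has been moved by the ring product `h_{i,c+dᵢ-1} ⋯ h_{i,c}`; hence its period is `dᵢ` times the
period of `j` under that product. For uniform `h ∈ H` the ring product is uniform in `S_{rᵢ}`,
and a given point lies in an `ℓ`-cycle of a uniform permutation of `{1, …, r}` with probability
`1/r` for each `1 ≤ ℓ ≤ r`. So each of the `dᵢ rᵢ` points of block `i` has period `k` with
probability `1/rᵢ` when `dᵢ ∣ k ≤ dᵢ rᵢ`, and never otherwise.
-/

open Equiv Function Finset
open scoped Nat

theorem Function.Semiconj.minimalPeriod_eq {α β : Type*} {e : α → β} {f : α → α} {g : β → β}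
    (h : Semiconj e f g) (he : Injective e) (x : α) :
    minimalPeriod g (e x) = minimalPeriod f x :=
  minimalPeriod_eq_minimalPeriod_iff.2 fun n => by
    simp only [IsPeriodicPt, IsFixedPt, ← h.iterate_right n x, he.eq_iff]

theorem Function.minimalPeriod_eq_mul_minimalPeriod_iterate {α : Type*} {f : α → α} {x : α}
    {d : ℕ} (hd : ∀ n, IsPeriodicPt f n x → d ∣ n) :
    minimalPeriod f x = d * minimalPeriod f^[d] x := by
  have hdvd : d ∣ minimalPeriod f x := hd _ (isPeriodicPt_minimalPeriod f x)
  rcases d.eq_zero_or_pos with rfl | hpos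
  · simpa using hdvd
  · rw [minimalPeriod_iterate_eq_div_gcd hpos.ne', Nat.gcd_eq_right hdvd,
      Nat.mul_div_cancel' hdvd]

theorem Fintype.card_smul_sum_comp_eval {ι : Type*} [DecidableEq ι] [Fintype ι] {κ : ι → Type*}
    [∀ i, Fintype (κ i)] {M : Type*} [AddCommMonoid M] (i : ι) (G : κ i → M) :
    Fintype.card (κ i) • ∑ h : (∀ j, κ j), G (h i) = Fintype.card (∀ j, κ j) • ∑ a, G a := by
  rw [← (Equiv.piSplitAt i κ).symm.sum_comp, Fintype.card_congr (Equiv.piSplitAt i κ),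
    Fintype.card_prod, Fintype.sum_prod_type]
  simp [Equiv.piSplitAt, smul_sum, mul_smul]

theorem List.sum_comp_prod_reverse_ofFn {G M : Type*} [Group G] [Fintype G] [AddCommMonoid M]
    (d : ℕ) (F : G → M) :
    ∑ h : Fin (d + 1) → G, F (List.ofFn h).reverse.prod = Fintype.card G ^ d • ∑ g, F g := by
  rw [← (Fin.consEquiv fun _ => G).sum_comp, Fintype.sum_prod_type_right]
  simp only [Fin.consEquiv_apply, List.ofFn_succ, Fin.cons_zero, Fin.cons_succ, List.reverse_cons,
    List.prod_append, List.prod_singleton]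
  have hmul (a : G) : ∑ g, F (a * g) = ∑ g, F g := Equiv.sum_comp (Equiv.mulLeft a) F
  simp only [hmul, sum_const, card_univ, Fintype.card_fun, Fintype.card_fin]

namespace Equiv.Perm

theorem minimalPeriod_pos {α : Type*} [Finite α] (σ : Perm α) (x : α) : 0 < minimalPeriod σ x :=
  minimalPeriod_pos_of_mem_periodicPts (σ.injective.mem_periodicPts x)

theorem card_filter_minimalPeriod_sigmaCongrRight {ι : Type*} [Fintype ι] {κ : ι → Type*}
    [∀ i, Fintype (κ i)] (f : ∀ i, Perm (κ i)) (k : ℕ) :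
    #{x | minimalPeriod (sigmaCongrRight f) x = k} = ∑ i, #{y | minimalPeriod (f i) y = k} := by
  simp only [card_filter, ← univ_sigma_univ, sum_sigma]
  refine sum_congr rfl fun i _ => sum_congr rfl fun y _ => ?_
  rw [Semiconj.minimalPeriod_eq (e := Sigma.mk i) (f := f i) (g := sigmaCongrRight f)
    (fun _ => rfl) sigma_mk_injective y]

section DecomposeOption

variable {β : Type*} [DecidableEq β]

theorem minimalPeriod_decomposeOption_symm_none (e : Perm β) :
    minimalPeriod (decomposeOption.symm (none, e)) none = 1 :=
  minimalPeriod_eq_one_iff_isFixedPt.2 (by simp [IsFixedPt])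

theorem minimalPeriod_decomposeOption_symm_some [Finite β] (a : β) (e : Perm β) :
    minimalPeriod (decomposeOption.symm (some a, e)) none = minimalPeriod e a + 1 := by
  set σ := decomposeOption.symm (some a, e)
  set L := minimalPeriod e a
  have hL : 0 < L := e.minimalPeriod_pos a
  -- the orbit of `none` is `none ↦ a ↦ e a ↦ ⋯ ↦ e^[L-1] a ↦ none`
  have horbit : ∀ s < L, σ^[s + 1] none = some (e^[s] a) := by
    intro s
    induction s with
    | zero => simp [σ]
    | succ s ih =>
      intro hs
      have hne : e (e^[s] a) ≠ a := by
        rw [← iterate_succ_apply' e]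
        exact not_isPeriodicPt_of_pos_of_lt_minimalPeriod s.succ_ne_zero hs
      rw [iterate_succ_apply', ih (by omega), iterate_succ_apply' e]
      simp [σ, swap_apply_of_ne_of_ne, hne]
  have hper : IsPeriodicPt σ (L + 1) none := by
    obtain ⟨m, hm⟩ := Nat.exists_eq_add_one_of_ne_zero hL.ne'
    have hlast : e (e^[m] a) = a := by
      rw [← iterate_succ_apply' e, Nat.succ_eq_add_one, ← hm]
      exact iterate_minimalPeriod
    rw [IsPeriodicPt, IsFixedPt, iterate_succ_apply', hm, horbit m (by omega)]
    simp [σ, hlast]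
  refine le_antisymm (hper.minimalPeriod_le L.succ_pos) (not_lt.1 fun hlt => ?_)
  obtain ⟨s, hs⟩ := Nat.exists_eq_succ_of_ne_zero (σ.minimalPeriod_pos none).ne'
  have := horbit s (by omega)
  rw [← Nat.succ_eq_add_one, ← hs, iterate_minimalPeriod] at this
  simp at this

end DecomposeOption

variable {α : Type*} [Fintype α] [DecidableEq α]

theorem minimalPeriod_eq_card_support_cycleOf {σ : Perm α} {x : α} (hx : σ x ≠ x) :
    minimalPeriod σ x = #(σ.cycleOf x).support := by
  have hmem : x ∈ (σ.cycleOf x).support :=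
    mem_support_cycleOf_iff.2 ⟨.refl _ _, mem_support.2 hx⟩
  refine Nat.dvd_right_iff_eq.1 fun n => ?_
  rw [← isPeriodicPt_iff_minimalPeriod_dvd, IsPeriodicPt, IsFixedPt, ← coe_pow,
    (σ.isCycleOn_support_cycleOf x).pow_apply_eq hmem]

theorem card_filter_minimalPeriod_eq_mul_cycleCount (σ : Perm α) {k : ℕ} (hk : 0 < k) :
    #{x | minimalPeriod σ x = k} = k * cycleCount σ k := by
  unfold cycleCount
  split_ifs with hk1
  · subst hk1
    simp [minimalPeriod_eq_one_iff_isFixedPt, IsFixedPt]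
  set cycles := σ.cycleFactorsFinset.filter fun c => #c.support = k
  have hpoints : ({x | minimalPeriod σ x = k} : Finset α) = cycles.biUnion support := by
    ext x
    simp only [mem_filter, mem_univ, true_and, mem_biUnion, cycles]
    constructor
    · intro hx
      have hmoved : σ x ≠ x := fun hfix => hk1 <| hx ▸ minimalPeriod_eq_one_iff_isFixedPt.2 hfix
      refine ⟨σ.cycleOf x, ⟨cycleOf_mem_cycleFactorsFinset_iff.2 (mem_support.2 hmoved), ?_⟩, ?_⟩
      · rw [← minimalPeriod_eq_card_support_cycleOf hmoved, hx]
      · exact mem_support_cycleOf_iff.2 ⟨.refl _ _, mem_support.2 hmoved⟩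
    · rintro ⟨c, ⟨hc, hcard⟩, hxc⟩
      have hmoved : σ x ≠ x := mem_support.1 (mem_cycleFactorsFinset_support_le hc hxc)
      rw [minimalPeriod_eq_card_support_cycleOf hmoved, ← cycle_is_cycleOf hxc hc, hcard]
  have hcount : σ.cycleType.count k = #cycles := by
    rw [cycleType_def, Multiset.count_map]
    simp only [cycles, Finset.card, Finset.filter_val, comp_apply, eq_comm]
    congr
  rw [hpoints, card_biUnion, sum_congr rfl fun c hc => (mem_filter.1 hc).2, sum_const,
    smul_eq_mul, hcount, mul_comm]
  exact fun c hc c' hc' hne => (σ.cycleFactorsFinset_pairwise_disjoint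
    (mem_filter.1 hc).1 (mem_filter.1 hc').1 hne).disjoint_support

open Fintype in
theorem card_filter_perm_minimalPeriod_eq (j : α) {ℓ : ℕ} (hℓ : 0 < ℓ) :
    #{σ : Perm α | minimalPeriod σ j = ℓ} = if ℓ ≤ card α then (card α - 1)! else 0 := by
  obtain ⟨n, hn⟩ : ∃ n, card α = n := ⟨_, rfl⟩
  induction n generalizing α ℓ with
  | zero =>
    have : Nonempty α := ⟨j⟩
    exact absurd hn card_ne_zero
  | succ n ih =>
    -- identify `α` with `Option {b // b ≠ j}`, `j` becoming `none`, and split off `σ none`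
    let E : Option {b // b ≠ j} ≃ α := optionSubtypeNe j
    have hβ : card {b // b ≠ j} = n := by simp [card_subtype_compl, hn]
    have hperiod (σ : Perm α) : minimalPeriod σ j = minimalPeriod ((permCongr E).symm σ) none :=
      Semiconj.minimalPeriod_eq (e := E) (f := (permCongr E).symm σ) (g := σ)
        (fun x => by simp) E.injective none
    have hsplit : #{σ : Perm α | minimalPeriod σ j = ℓ}
        = #{q : Option {b // b ≠ j} × Perm {b // b ≠ j} |
            minimalPeriod (decomposeOption.symm q) none = ℓ} :=
      card_equiv ((permCongr E).symm.trans decomposeOption) fun σ => by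
        simp only [mem_filter, mem_univ, true_and, trans_apply, symm_apply_apply, hperiod]
    rw [hsplit, card_filter, sum_prod_type, sum_option]
    simp only [minimalPeriod_decomposeOption_symm_none, minimalPeriod_decomposeOption_symm_some]
    match ℓ, hℓ with
    | 1, _ =>
      have hnot (a) (e : Perm {b // b ≠ j}) : minimalPeriod e a ≠ 0 := (e.minimalPeriod_pos a).ne'
      simp [hnot, hn, Fintype.card_perm]
    | m + 2, _ =>
      have hcount (a : {b // b ≠ j}) :
          (∑ e : Perm {b // b ≠ j}, if minimalPeriod e a + 1 = m + 2 then 1 else 0)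
            = if m + 1 ≤ n then (n - 1)! else 0 := by
        simp only [Nat.add_right_cancel_iff, ← card_filter, ← hβ]
        exact ih a m.succ_pos hβ
      simp only [show 1 ≠ m + 2 by omega, if_false, sum_const_zero, zero_add, hcount, sum_const,
        Finset.card_univ, hβ, smul_eq_mul, hn, Nat.add_sub_cancel, mul_ite, mul_zero]
      rcases le_or_gt (m + 1) n with hm | hm
      · rw [if_pos hm, if_pos (by omega), Nat.mul_factorial_pred (by omega)]
      · rw [if_neg (by omega), if_neg (by omega)]

open Fintype in
theorem card_filter_perm_mul_minimalPeriod_eq (j : α) {d k : ℕ} (hk : 0 < k) :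
    #{σ : Perm α | d * minimalPeriod σ j = k}
      = if d ∣ k ∧ k ≤ d * card α then (card α - 1)! else 0 := by
  by_cases hdk : d ∣ k
  · obtain ⟨ℓ, rfl⟩ := hdk
    have hd : 0 < d := Nat.pos_of_mul_pos_right hk
    simp only [Nat.mul_left_cancel_iff hd, dvd_mul_right, true_and, Nat.mul_le_mul_left_iff hd]
    exact card_filter_perm_minimalPeriod_eq j (Nat.pos_of_mul_pos_left hk)
  · rw [if_neg (hdk ∘ And.left), Finset.card_eq_zero, filter_eq_empty_iff]
    exact fun σ _ hσ => hdk (hσ ▸ dvd_mul_right d _)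

end Equiv.Perm

section Grid

open Fin.NatCast

variable {r d : ℕ}

theorem tauGrid_mul_gridPerm_apply (h : Fin (d + 1) → Perm (Fin r)) (j : Fin r)
    (c : Fin (d + 1)) :
    (tauGrid r (d + 1) * gridPerm r (d + 1) h) (j, c) = (h c j, c + 1) := by
  simp [tauGrid, gridPerm]

theorem iterate_tauGrid_mul_gridPerm (h : Fin (d + 1) → Perm (Fin r)) (j : Fin r)
    (c : Fin (d + 1)) (m : ℕ) :
    (tauGrid r (d + 1) * gridPerm r (d + 1) h)^[m] (j, c)
      = (mComp (fun i : Fin m => h (c + (i : ℕ))) j, c + m) := by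
  induction m with
  | zero => simp [mComp]
  | succ m ih =>
    rw [iterate_succ_apply', ih, tauGrid_mul_gridPerm_apply]
    simp only [mComp, List.ofFn_succ', List.concat_eq_append, List.reverse_concat',
      List.prod_cons, Perm.mul_apply, Fin.val_castSucc, Fin.val_last, Nat.cast_succ, add_assoc]

theorem iterate_card_tauGrid_mul_gridPerm (h : Fin (d + 1) → Perm (Fin r)) (j : Fin r)
    (c : Fin (d + 1)) :
    (tauGrid r (d + 1) * gridPerm r (d + 1) h)^[d + 1] (j, c)
      = (mComp (fun i => h (c + i)) j, c) := by
  rw [iterate_tauGrid_mul_gridPerm]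
  simp [Fin.cast_val_eq_self]

theorem minimalPeriod_tauGrid_mul_gridPerm (h : Fin (d + 1) → Perm (Fin r)) (j : Fin r)
    (c : Fin (d + 1)) :
    minimalPeriod (tauGrid r (d + 1) * gridPerm r (d + 1) h) (j, c)
      = (d + 1) * minimalPeriod (mComp fun i => h (c + i)) j := by
  rw [minimalPeriod_eq_mul_minimalPeriod_iterate (d := d + 1) fun n hn => ?_]
  · exact congrArg _ <| Semiconj.minimalPeriod_eq (e := fun j => (j, c))
      (fun j => (iterate_card_tauGrid_mul_gridPerm h j c).symm) (Prod.mk_left_injective c) j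
  · rw [IsPeriodicPt, IsFixedPt, iterate_tauGrid_mul_gridPerm, Prod.mk.injEq] at hn
    exact Fin.natCast_eq_zero.1 (add_eq_left.1 hn.2)

theorem sum_comp_mComp_add {M : Type*} [AddCommMonoid M] (c : Fin (d + 1))
    (F : Perm (Fin r) → M) :
    ∑ h : Fin (d + 1) → Perm (Fin r), F (mComp fun i => h (c + i))
      = Fintype.card (Perm (Fin r)) ^ d • ∑ g, F g := by
  rw [← List.sum_comp_prod_reverse_ofFn]
  exact ((Equiv.addLeft c).symm.arrowCongr (Equiv.refl _)).sum_comp fun h => F (mComp h)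

end Grid

theorem sum_card_filter_minimalPeriod_tauGrid_mul_gridPerm (r d : ℕ) {k : ℕ} (hk : 0 < k) :
    ∑ h : Fin d → Perm (Fin r), #{p | minimalPeriod (tauGrid r d * gridPerm r d h) p = k}
      = if d ∣ k ∧ k ≤ d * r then Fintype.card (Fin d → Perm (Fin r)) * d else 0 := by
  rcases d with _ | d
  · simp only [zero_dvd_iff, hk.ne', false_and, if_false]
    exact sum_eq_zero fun h _ => Finset.card_eq_zero.2 (filter_eq_empty_iff.2 fun p => p.2.elim0)
  calc ∑ h : Fin (d + 1) → Perm (Fin r),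
        #{p | minimalPeriod (tauGrid r (d + 1) * gridPerm r (d + 1) h) p = k}
      = ∑ j : Fin r, ∑ c : Fin (d + 1), ∑ h : Fin (d + 1) → Perm (Fin r),
          if (d + 1) * minimalPeriod (mComp fun i => h (c + i)) j = k then 1 else 0 := by
        simp only [card_filter, Fintype.sum_prod_type, minimalPeriod_tauGrid_mul_gridPerm]
        rw [sum_comm]
        exact sum_congr rfl fun j _ => sum_comm
    _ = ∑ j : Fin r, ∑ c : Fin (d + 1), Fintype.card (Perm (Fin r)) ^ d *
          if (d + 1) ∣ k ∧ k ≤ (d + 1) * r then (r - 1)! else 0 := by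
        refine sum_congr rfl fun j _ => sum_congr rfl fun c _ => ?_
        rw [sum_comp_mComp_add c fun m => if (d + 1) * minimalPeriod m j = k then 1 else 0,
          smul_eq_mul, ← card_filter, Perm.card_filter_perm_mul_minimalPeriod_eq _ hk,
          Fintype.card_fin]
    _ = _ := by
        split_ifs with hcond
        · have hr : 0 < r := Nat.pos_of_mul_pos_left (hk.trans_le hcond.2)
          simp only [sum_const, card_univ, Fintype.card_fin, smul_eq_mul, Fintype.card_fun,
            Fintype.card_perm, ← Nat.mul_factorial_pred hr.ne']
          ring
        · simp

theorem tauBig_mul_hPermBig {n : ℕ} {r d : Fin n → ℕ} (h : BigH n r d) :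
    tauBig n r d * hPermBig h
      = sigmaCongrRight fun i => tauGrid (r i) (d i) * gridPerm (r i) (d i) (h i) :=
  rfl

theorem sum_card_filter_minimalPeriod_tauBig_block {n : ℕ} {r d : Fin n → ℕ} (i : Fin n)
    {k : ℕ} (hk : 0 < k) :
    ∑ h : BigH n r d,
        #{p | minimalPeriod (tauGrid (r i) (d i) * gridPerm (r i) (d i) (h i)) p = k}
      = if d i ∣ k ∧ k ≤ d i * r i then Fintype.card (BigH n r d) * d i else 0 := by
  refine Nat.eq_of_mul_eq_mul_left (Fintype.card_pos (α := Fin (d i) → Perm (Fin (r i)))) ?_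
  rw [← smul_eq_mul, Fintype.card_smul_sum_comp_eval (κ := fun i => Fin (d i) → Perm (Fin (r i)))
      i fun a => #{p | minimalPeriod (tauGrid (r i) (d i) * gridPerm (r i) (d i) a) p = k},
    smul_eq_mul, sum_card_filter_minimalPeriod_tauGrid_mul_gridPerm _ _ hk]
  split_ifs <;> ring

/-- The expected number of `k`-cycles of a uniformly random element of the coset `τH`
equals `(1/k)·∑_{i : dᵢ ∣ k, dᵢrᵢ ≥ k} dᵢ`. -/
theorem stmt8 (n : ℕ) (r d : Fin n → ℕ) (k : ℕ) (hk : 1 ≤ k) :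
    ((Fintype.card (BigH n r d) : ℚ))⁻¹ *
        ∑ h : BigH n r d, (cycleCount (tauBig n r d * hPermBig h) k : ℚ)
      = (k : ℚ)⁻¹ *
          ∑ i ∈ Finset.univ.filter (fun i => d i ∣ k ∧ k ≤ d i * r i), (d i : ℚ) := by
  have hpoints (h : BigH n r d) : k * cycleCount (tauBig n r d * hPermBig h) k
      = ∑ i, #{p | minimalPeriod (tauGrid (r i) (d i) * gridPerm (r i) (d i) (h i)) p = k} := by
    rw [← Perm.card_filter_minimalPeriod_eq_mul_cycleCount _ hk, tauBig_mul_hPermBig,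
      Perm.card_filter_minimalPeriod_sigmaCongrRight]
  have hcount : k * ∑ h : BigH n r d, cycleCount (tauBig n r d * hPermBig h) k
      = Fintype.card (BigH n r d) * ∑ i ∈ univ.filter (fun i => d i ∣ k ∧ k ≤ d i * r i), d i := by
    rw [mul_sum, sum_congr rfl fun h _ => hpoints h, sum_comm,
      sum_congr rfl fun i _ => sum_card_filter_minimalPeriod_tauBig_block i hk, ← sum_filter,
      mul_sum]
  have hcard : (Fintype.card (BigH n r d) : ℚ) ≠ 0 := Nat.cast_ne_zero.2 Fintype.card_ne_zero
  have hk' : (k : ℚ) ≠ 0 := Nat.cast_ne_zero.2 (by omega)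
  field_simp
  rw [mul_comm]
  exact_mod_cast hcount
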